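/- Let (p,q) ∈ ℕ×ℤ be relatively prime with p ≥ 1 and ω ∈ ℝ, and let U_{p,q} := τ_{s,t} with pt − qs = 1. Then for every maximally periodic Birkhoff sequence x of rotation number ω and all integers i_1 ≤ i_2, there exists a (p,q)-periodic Birkhoff sequence y such that y_j ≤ x_j ≤ (U_{p,q}^a y)_j for every i_1 ≤ j ≤ i_2, where a := ⌈(i_2 − i_1)·|q − ω·p|⌉. -/

import Mathlib

open Filter Topology

/-- The shift map `τ_{k,l}`: `(τ_{k,l} x) i = x (i - k) + l`. -/
def tau (k l : ℤ) (x : ℤ → ℝ) : ℤ → ℝ := fun i => x (i - k) + (l : ℝ)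

/-- A sequence is Birkhoff (well-ordered) if its integer translates are totally ordered
in the pointwise partial order. -/
def Birkhoff (x : ℤ → ℝ) : Prop :=
  ∀ k l k' l' : ℤ, tau k l x ≤ tau k' l' x ∨ tau k' l' x ≤ tau k l x

/-- `x` has rotation number `ω` if `x n / n → ω` as `n → ±∞`. -/
def HasRotNum (x : ℤ → ℝ) (ω : ℝ) : Prop :=
  Tendsto (fun n : ℤ => x n / (n : ℝ)) atTop (𝓝 ω) ∧
  Tendsto (fun n : ℤ => x n / (n : ℝ)) atBot (𝓝 ω)

/-- A Birkhoff sequence of rotation number `ω` is maximally periodic if `τ_{k,l} x = x`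
whenever `-ω k + l = 0`. -/
def MaxPeriodic (ω : ℝ) (x : ℤ → ℝ) : Prop :=
  ∀ k l : ℤ, -ω * (k : ℝ) + (l : ℝ) = 0 → tau k l x = x

/-- Partial derivative of a function on sequence space with respect to coordinate `i`. -/
noncomputable def pd (F : (ℤ → ℝ) → ℝ) (i : ℤ) : (ℤ → ℝ) → ℝ :=
  fun x => deriv (fun t => F (Function.update x i t)) (x i)

/-- Iterated partial derivatives along a list of coordinates. -/
noncomputable def pdList (F : (ℤ → ℝ) → ℝ) : List ℤ → (ℤ → ℝ) → ℝ
  | [] => F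
  | i :: L => pd (pdList F L) i

/-- `F` and `G` are `ε`-close in the `C^k` norm: all iterated partial derivatives of order
`≤ k` of the difference are bounded by `ε`. -/
def CkClose (k : ℕ) (ε : ℝ) (F G : (ℤ → ℝ) → ℝ) : Prop :=
  ∀ L : List ℤ, L.length ≤ k → ∀ x : ℤ → ℝ, |pdList (fun y => F y - G y) L x| ≤ ε

/-- Conditions A-E on a family of local potentials `S j : ℝ^ℤ → ℝ`, with range `r` and
uniform derivative bound `C`. -/
structure SatisfiesAE (r : ℕ) (C : ℝ) (S : ℤ → (ℤ → ℝ) → ℝ) : Prop where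
  r_pos : 1 ≤ r
  C_pos : 0 < C
  /- A: finite range -/
  finRange : ∀ j : ℤ, ∀ x y : ℤ → ℝ, (∀ i : ℤ, |i - j| ≤ (r : ℤ) → x i = y i) → S j x = S j y
  /- A: C² smoothness -/
  contS : ∀ j : ℤ, Continuous (S j)
  diff1 : ∀ j i : ℤ, ∀ x : ℤ → ℝ, DifferentiableAt ℝ (fun t => S j (Function.update x i t)) (x i)
  diff2 : ∀ j i k : ℤ, ∀ x : ℤ → ℝ,
    DifferentiableAt ℝ (fun t => pd (S j) i (Function.update x k t)) (x k)
  cont1 : ∀ j i : ℤ, Continuous (pd (S j) i)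
  cont2 : ∀ j i k : ℤ, Continuous (pd (pd (S j) i) k)
  /- B: shift invariance -/
  shiftInv : ∀ j k l : ℤ, ∀ x : ℤ → ℝ, S j x = S (j + k) (tau k l x)
  /- C: coercivity -/
  coercive : ∀ j k : ℤ, |k - j| = 1 → ∀ M : ℝ, ∃ R : ℝ, ∀ x : ℤ → ℝ, R ≤ |x k - x j| → M ≤ S j x
  /- D: monotonicity -/
  mono : ∀ j i k : ℤ, i ≠ k → ∀ x : ℤ → ℝ, pd (pd (S j) i) k x ≤ 0
  monoStrict : ∀ j k : ℤ, |j - k| = 1 → ∀ x : ℤ → ℝ, pd (pd (S j) j) k x < 0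
  /- E: bounded derivatives -/
  bdd1 : ∀ j i : ℤ, ∀ x : ℤ → ℝ, |pd (S j) i x| ≤ C
  bdd2 : ∀ j i k : ℤ, ∀ x : ℤ → ℝ, |pd (pd (S j) i) k x| ≤ C

/-- The periodic action `W_p(x) = ∑_{j=1}^p S_j(x)`. -/
noncomputable def Wper (S : ℤ → (ℤ → ℝ) → ℝ) (p : ℕ) (x : ℤ → ℝ) : ℝ :=
  ∑ j ∈ Finset.Icc (1 : ℤ) (p : ℤ), S j x

/-- A `(p,q)`-periodic minimizer: `τ_{p,q} x = x` and `x` minimizes `W_p` over `X_{p,q}`. -/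
def PerMin (S : ℤ → (ℤ → ℝ) → ℝ) (p : ℕ) (q : ℤ) (x : ℤ → ℝ) : Prop :=
  tau (p : ℤ) q x = x ∧ ∀ y : ℤ → ℝ, tau (p : ℤ) q y = y → Wper S p x ≤ Wper S p y

/-- The (formally convergent, by finite range) energy difference `W(x+y) - W(x)`. -/
noncomputable def Wdiff (S : ℤ → (ℤ → ℝ) → ℝ) (x y : ℤ → ℝ) : ℝ :=
  ∑' j : ℤ, (S j (fun i => x i + y i) - S j x)

/-- `x` is a global minimizer: every finite-support variation does not decrease the energy. -/
def GlobalMin (S : ℤ → (ℤ → ℝ) → ℝ) (x : ℤ → ℝ) : Prop :=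
  ∀ y : ℤ → ℝ, (Function.support y).Finite → 0 ≤ Wdiff S x y

/-- The extended orbit `Σ_y = { y k + l : k, l ∈ ℤ }`. -/
def extOrbit (y : ℤ → ℝ) : Set ℝ := {ξ : ℝ | ∃ k l : ℤ, ξ = y k + (l : ℝ)}

/-! The hull function `h ξ = sup {x j + l | j * ω + l ≤ ξ}` of `x` is monotone, commutes with
integer translations and satisfies `h (j * ω) = x j`; this uses that a maximally periodic Birkhoff
sequence of rotation number `ω` satisfies `x ≤ τ_{k,m} x` whenever `ω k ≤ m`. Sampling `h` along a
line of slope `q / p`, `y j = h (q / p * j + c)`, gives a `(p,q)`-periodic Birkhoff sequence on which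
`U_{p,q}` acts by adding `1 / p` to the argument. Choose `c` so that the line stays below `j * ω` on
`[i₁, i₂]`; there the gap is at most `(i₂ - i₁) |ω - q / p|`, which `a` applications of `U_{p,q}`
close. -/

theorem HasRotNum.tendsto_natCast_mul_div {x : ℤ → ℝ} {ω : ℝ} (hrot : HasRotNum x ω) (k : ℤ) :
    Tendsto (fun n : ℕ => x (n * k) / n) atTop (𝓝 (ω * k)) := by
  rcases eq_or_ne k 0 with rfl | hk
  · simpa using tendsto_const_div_atTop_nhds_zero_nat (x 0)
  have hcof : Tendsto (fun n : ℤ => x n / n) cofinite (𝓝 ω) := by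
    rw [Int.cofinite_eq]
    exact hrot.2.sup hrot.1
  have hinj : Function.Injective (fun n : ℕ => (n : ℤ) * k) := fun m n h => by
    simpa [hk] using h
  have hlim := (hcof.comp (Nat.cofinite_eq_atTop ▸ hinj.tendsto_cofinite)).mul_const (k : ℝ)
  refine hlim.congr' ?_
  filter_upwards [eventually_ne_atTop 0] with n hn
  have : (k : ℝ) ≠ 0 := by exact_mod_cast hk
  simp only [Function.comp_apply]
  push_cast
  field_simp

theorem HasRotNum.le_mul_of_forall_add_le {x : ℤ → ℝ} {ω : ℝ} (hrot : HasRotNum x ω) {k m : ℤ}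
    (h : ∀ i, x i + m ≤ x (i + k)) : (m : ℝ) ≤ ω * k := by
  have hiter : ∀ n : ℕ, x 0 + n * m ≤ x (n * k) := by
    intro n
    induction n with
    | zero => simp
    | succ n ih =>
      rw [show ((n + 1 : ℕ) : ℤ) * k = n * k + k by push_cast; ring]
      push_cast
      linarith [h (n * k)]
  have hlow : Tendsto (fun n : ℕ => x 0 / n + m) atTop (𝓝 (0 + m)) :=
    (tendsto_const_div_atTop_nhds_zero_nat (x 0)).add_const _
  refine zero_add (m : ℝ) ▸ le_of_tendsto_of_tendsto hlow (hrot.tendsto_natCast_mul_div k) ?_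
  filter_upwards [eventually_gt_atTop 0] with n hn
  have hn' : (0 : ℝ) < n := by exact_mod_cast hn
  rw [div_add' _ _ _ hn'.ne', div_le_div_iff_of_pos_right hn']
  linarith [hiter n]

theorem tau_zero_zero (x : ℤ → ℝ) : tau 0 0 x = x := by
  ext i
  simp [tau]

def RotationOrdered (ω : ℝ) (x : ℤ → ℝ) : Prop :=
  ∀ k m : ℤ, ω * k ≤ m → x ≤ tau k m x

theorem Birkhoff.rotationOrdered {x : ℤ → ℝ} {ω : ℝ} (hB : Birkhoff x) (hrot : HasRotNum x ω)
    (hmax : MaxPeriodic ω x) : RotationOrdered ω x := by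
  intro k m hkm
  rcases tau_zero_zero x ▸ hB 0 0 k m with hle | hge
  · exact hle
  · have : (m : ℝ) ≤ ω * k :=
      hrot.le_mul_of_forall_add_le fun i => by simpa [tau] using hge (i + k)
    exact (hmax k m (by linarith)).ge

section Hull

variable {ω : ℝ} {x : ℤ → ℝ}

def hullSet (ω : ℝ) (x : ℤ → ℝ) (ξ : ℝ) : Set ℝ :=
  {v : ℝ | ∃ j l : ℤ, v = x j + l ∧ j * ω + l ≤ ξ}

noncomputable def hull (ω : ℝ) (x : ℤ → ℝ) (ξ : ℝ) : ℝ :=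
  sSup (hullSet ω x ξ)

theorem hullSet_nonempty (ξ : ℝ) : (hullSet ω x ξ).Nonempty :=
  ⟨x 0 + ⌊ξ⌋, 0, ⌊ξ⌋, rfl, by simpa using Int.floor_le ξ⟩

theorem RotationOrdered.hullSet_bddAbove (hx : RotationOrdered ω x) (ξ : ℝ) :
    BddAbove (hullSet ω x ξ) := by
  refine ⟨x 0 + ξ + 1, ?_⟩
  rintro v ⟨j, l, rfl, hjl⟩
  have hj := hx j ⌈ω * j⌉ (Int.le_ceil _) j
  simp only [tau, sub_self] at hj
  linarith [Int.ceil_lt_add_one (ω * j)]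

theorem RotationOrdered.hull_mono (hx : RotationOrdered ω x) : Monotone (hull ω x) :=
  fun _ η hξη => csSup_le_csSup (hx.hullSet_bddAbove η) (hullSet_nonempty _) <|
    fun _ ⟨j, l, hv, hjl⟩ => ⟨j, l, hv, hjl.trans hξη⟩

theorem hullSet_add_intCast (ξ : ℝ) (l : ℤ) :
    hullSet ω x (ξ + l) = OrderIso.addRight (l : ℝ) '' hullSet ω x ξ := by
  ext v
  simp only [hullSet, Set.mem_image, Set.mem_ofPred_eq, OrderIso.addRight_apply]
  constructor
  · rintro ⟨j, l', rfl, h⟩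
    exact ⟨x j + (l' - l : ℤ), ⟨j, l' - l, rfl, by push_cast; linarith⟩, by push_cast; ring⟩
  · rintro ⟨_, ⟨j, l', rfl, h⟩, rfl⟩
    exact ⟨j, l' + l, by push_cast; ring, by push_cast; linarith⟩

theorem RotationOrdered.hull_add_intCast (hx : RotationOrdered ω x) (ξ : ℝ) (l : ℤ) :
    hull ω x (ξ + l) = hull ω x ξ + l := by
  rw [hull, hullSet_add_intCast, ← OrderIso.map_csSup' _ (hullSet_nonempty ξ)
    (hx.hullSet_bddAbove ξ)]
  rfl

theorem RotationOrdered.hull_intCast_mul (hx : RotationOrdered ω x) (j : ℤ) :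
    hull ω x (j * ω) = x j := by
  refine le_antisymm (csSup_le (hullSet_nonempty _) ?_)
    (le_csSup (hx.hullSet_bddAbove _) ⟨j, 0, by simp, by simp⟩)
  rintro v ⟨j', l, rfl, h⟩
  have hj := hx (j' - j) (-l) (by push_cast; linarith) j'
  simp only [tau, sub_sub_cancel] at hj
  push_cast at hj
  linarith

end Hull

section AffineSeq

variable {f : ℝ → ℝ}

def affineSeq (f : ℝ → ℝ) (ρ c : ℝ) : ℤ → ℝ := fun j => f (ρ * j + c)

theorem tau_affineSeq (hf : ∀ (ξ : ℝ) (l : ℤ), f (ξ + l) = f ξ + l) (ρ c : ℝ) (k l : ℤ) :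
    tau k l (affineSeq f ρ c) = affineSeq f ρ (c + (l - ρ * k)) := by
  ext i
  simp only [tau, affineSeq, ← hf]
  push_cast
  ring_nf

theorem iterate_tau_affineSeq (hf : ∀ (ξ : ℝ) (l : ℤ), f (ξ + l) = f ξ + l) (ρ c : ℝ)
    (k l : ℤ) (n : ℕ) :
    (tau k l)^[n] (affineSeq f ρ c) = affineSeq f ρ (c + n * (l - ρ * k)) := by
  induction n with
  | zero => simp
  | succ n ih =>
    rw [Function.iterate_succ_apply', ih, tau_affineSeq hf]
    push_cast
    ring_nf

theorem birkhoff_affineSeq (hmono : Monotone f) (hf : ∀ (ξ : ℝ) (l : ℤ), f (ξ + l) = f ξ + l)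
    (ρ c : ℝ) : Birkhoff (affineSeq f ρ c) := by
  intro k l k' l'
  simp only [tau_affineSeq hf]
  rcases le_total ((l : ℝ) - ρ * k) (l' - ρ * k') with h | h
  · exact .inl fun i => hmono (by linarith)
  · exact .inr fun i => hmono (by linarith)

end AffineSeq

theorem exists_le_mul_and_mul_sub_le (d a b : ℝ) :
    ∃ c, ∀ j ∈ Set.Icc a b, c ≤ d * j ∧ d * j - c ≤ |d| * (b - a) := by
  rcases le_total 0 d with hd | hd
  · refine ⟨d * a, fun j ⟨ha, hb⟩ => ⟨by nlinarith, ?_⟩⟩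
    rw [abs_of_nonneg hd]
    nlinarith
  · refine ⟨d * b, fun j ⟨ha, hb⟩ => ⟨by nlinarith, ?_⟩⟩
    rw [abs_of_nonpos hd]
    nlinarith

theorem confinement_general
    (p : ℕ) (hp : 1 ≤ p) (q s t : ℤ) (hst : (p : ℤ) * t - q * s = 1) (ω : ℝ)
    (x : ℤ → ℝ) (hB : Birkhoff x) (hrot : HasRotNum x ω) (hmax : MaxPeriodic ω x)
    (i1 i2 : ℤ) :
    ∃ y : ℤ → ℝ, Birkhoff y ∧ tau (p : ℤ) q y = y ∧
      ∀ j : ℤ, i1 ≤ j → j ≤ i2 →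
        y j ≤ x j ∧
        x j ≤ (tau s t)^[(⌈((i2 : ℝ) - (i1 : ℝ)) * |(q : ℝ) - ω * (p : ℝ)|⌉).toNat] y j := by
  have hp0 : (0 : ℝ) < p := by exact_mod_cast hp
  obtain ⟨ρ, hρ⟩ : ∃ ρ : ℝ, ρ * p = q := ⟨q / p, div_mul_cancel₀ _ hp0.ne'⟩
  have hx := hB.rotationOrdered hrot hmax
  have hshift := hx.hull_add_intCast
  have hts : (t - ρ * s) * p = 1 := by
    rw [sub_mul, mul_right_comm, hρ]
    exact_mod_cast (by linarith : (t * p - q * s : ℤ) = 1)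
  have hn : p * |ω - ρ| * (i2 - i1) ≤ ⌈((i2 : ℝ) - i1) * |(q : ℝ) - ω * p|⌉.toNat := by
    rw [Int.ceil_toNat, ← hρ, ← sub_mul, abs_mul, abs_sub_comm, abs_of_pos hp0]
    exact (le_of_eq (by ring)).trans (Nat.le_ceil _)
  obtain ⟨c, hc⟩ := exists_le_mul_and_mul_sub_le (ω - ρ) i1 i2
  refine ⟨affineSeq (hull ω x) ρ c, birkhoff_affineSeq hx.hull_mono hshift ρ c, ?_,
    fun j hj1 hj2 => ?_⟩
  · rw [tau_affineSeq hshift, Int.cast_natCast, hρ, sub_self, add_zero]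
  obtain ⟨hlow, hup⟩ := hc j ⟨by exact_mod_cast hj1, by exact_mod_cast hj2⟩
  rw [iterate_tau_affineSeq hshift, ← hx.hull_intCast_mul j]
  refine ⟨hx.hull_mono (by linarith), hx.hull_mono ?_⟩
  nlinarith

/-- Confinement: a maximally periodic Birkhoff sequence `x` of rotation number
`ω` can be squeezed, on any segment `[i₁, i₂]`, between a `(p,q)`-periodic Birkhoff sequence
`y` and its translate `U_{p,q}^a y`, where `a = ⌈(i₂-i₁)|q - ωp|⌉`. -/
theorem confinement
    (p : ℕ) (hp : 1 ≤ p) (q s t : ℤ) (hst : (p : ℤ) * t - q * s = 1) (ω : ℝ)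
    (x : ℤ → ℝ) (hB : Birkhoff x) (hrot : HasRotNum x ω) (hmax : MaxPeriodic ω x)
    (i1 i2 : ℤ) (h12 : i1 ≤ i2) :
    ∃ y : ℤ → ℝ, Birkhoff y ∧ tau (p : ℤ) q y = y ∧
      ∀ j : ℤ, i1 ≤ j → j ≤ i2 →
        y j ≤ x j ∧
        x j ≤ (tau s t)^[(⌈((i2 : ℝ) - (i1 : ℝ)) * |(q : ℝ) - ω * (p : ℝ)|⌉).toNat] y j :=
  confinement_general p hp q s t hst ω x hB hrot hmax i1 i2
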